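/- Commutators of lifted boost fields built from generalized translations with generalized translations (Lemma 3.6, boost case): fix i ∈ {1,2,3} and define 𝐙̂_i = t·𝐞_i + xⁱ·𝐞_0 + v⁰∂_{vⁱ} (the complete lift of the Lorentz boost with ordinary translations replaced by generalized translations). Then for every smooth f(t,x,v) and every j ∈ {1,2,3}: [𝐙̂_i, 𝐞_j] f = −δ_{ij}·𝐞_0 f − (∂_{x^j}φ/v⁰)·∂_{vⁱ} f and [𝐙̂_i, 𝐞_0] f = −𝐞_i f − (∂_t φ/v⁰)·∂_{vⁱ} f. -/

import Mathlib

noncomputable section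

/-- Phase space point `(t, x, v)`. -/
abbrev Pt : Type := ℝ × (Fin 3 → ℝ) × (Fin 3 → ℝ)

/-- `v⁰ = √(1+|v|²)`. -/
def vzero (v : Fin 3 → ℝ) : ℝ := Real.sqrt (1 + ∑ i, (v i) ^ 2)

/-- Vertical derivative `V_i f = ∂_{vⁱ} f`. -/
def Vop (i : Fin 3) (f : Pt → ℝ) (p : Pt) : ℝ :=
  fderiv ℝ f p ((0 : ℝ), (0 : Fin 3 → ℝ), Pi.single i 1)

/-- `W f = vⁱ ∂_{vⁱ} f`. -/
def Wop (f : Pt → ℝ) (p : Pt) : ℝ := ∑ i, p.2.2 i * Vop i f p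

/-- Derivative of a function of `(t,x)` in the constant spacetime direction `d`. -/
def Dphi (φ : ℝ × (Fin 3 → ℝ) → ℝ) (d : ℝ × (Fin 3 → ℝ)) (q : ℝ × (Fin 3 → ℝ)) : ℝ :=
  fderiv ℝ φ q d

/-- `𝐓(φ) = v⁰ ∂_t φ + vⁱ ∂_{xⁱ} φ`, evaluated at a phase-space point. -/
def TphiFn (φ : ℝ × (Fin 3 → ℝ) → ℝ) (p : Pt) : ℝ :=
  vzero p.2.2 * Dphi φ ((1 : ℝ), (0 : Fin 3 → ℝ)) (p.1, p.2.1) +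
    ∑ i, p.2.2 i * Dphi φ ((0 : ℝ), Pi.single i 1) (p.1, p.2.1)

/-- Free transport operator `𝐓 f = v⁰ ∂_t f + vⁱ ∂_{xⁱ} f`. -/
def Tfree (f : Pt → ℝ) (p : Pt) : ℝ :=
  vzero p.2.2 * fderiv ℝ f p ((1 : ℝ), (0 : Fin 3 → ℝ), (0 : Fin 3 → ℝ)) +
    ∑ i, p.2.2 i * fderiv ℝ f p ((0 : ℝ), Pi.single i 1, (0 : Fin 3 → ℝ))

/-- Perturbed transport operator `𝐓_φ f = 𝐓 f − (𝐓(φ) vⁱ + ∂_{xⁱ}φ) ∂_{vⁱ} f`. -/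
def Tpert (φ : ℝ × (Fin 3 → ℝ) → ℝ) (f : Pt → ℝ) (p : Pt) : ℝ :=
  Tfree f p -
    ∑ i, (TphiFn φ p * p.2.2 i + Dphi φ ((0 : ℝ), Pi.single i 1) (p.1, p.2.1)) * Vop i f p

/-- Generalized translation `𝐞_d f = ∂_d f − (∂_d φ) · vⁱ ∂_{vⁱ} f` (spacetime direction `d`). -/
def eop (φ : ℝ × (Fin 3 → ℝ) → ℝ) (d : ℝ × (Fin 3 → ℝ)) (f : Pt → ℝ) (p : Pt) : ℝ :=
  fderiv ℝ f p (d.1, d.2, (0 : Fin 3 → ℝ)) - Dphi φ d (p.1, p.2.1) * Wop f p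

/-- The coordinate direction `∂_{x^μ}`, `μ ∈ {0,1,2,3}`, with `x⁰ = t`. -/
def dir4 (μ : Fin 4) : ℝ × (Fin 3 → ℝ) :=
  if _h : (μ : ℕ) = 0 then ((1 : ℝ), (0 : Fin 3 → ℝ))
  else ((0 : ℝ), Pi.single (⟨(μ : ℕ) - 1, by have := μ.isLt; omega⟩ : Fin 3) 1)

/-- `𝐙̂_i = t·𝐞_i + xⁱ·𝐞_0 + v⁰∂_{vⁱ}`: the complete lift of the Lorentz boost with
ordinary translations replaced by generalized translations. -/
def Zhat (φ : ℝ × (Fin 3 → ℝ) → ℝ) (i : Fin 3) (f : Pt → ℝ) (p : Pt) : ℝ :=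
  p.1 * eop φ ((0 : ℝ), Pi.single i 1) f p
    + p.2.1 i * eop φ ((1 : ℝ), (0 : Fin 3 → ℝ)) f p
    + vzero p.2.2 * Vop i f p

/-!
Each of `𝐞_d`, `∂_{vⁱ}` and `𝐙̂_i` is differentiation along a vector field on phase space
(`eField`, `vField`, `zhatField`), so by Schwarz's theorem for `f` their commutators are
differentiation along the Lie brackets of these fields. The brackets follow from the Leibniz
rule `[g • X, Y] = g • [X, Y] - (Y g) • X`: the fields `eField φ c` commute with each other
(Schwarz for `φ`), `[∂_{vⁱ}, 𝐞_d] = -(∂_d φ) ∂_{vⁱ}`, `𝐞_d t = d⁰`, `𝐞_d xⁱ = dⁱ` and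
`𝐞_d v⁰ = -(∂_d φ) |v|² / v⁰`; the last two `∂_{vⁱ}` terms combine to `-(∂_d φ) / v⁰` because
`(v⁰)² - |v|² = 1`.
-/

open VectorField ContinuousLinearMap

def eField (φ : ℝ × (Fin 3 → ℝ) → ℝ) (d : ℝ × (Fin 3 → ℝ)) (p : Pt) : Pt :=
  (d.1, d.2, -Dphi φ d (p.1, p.2.1) • p.2.2)

def vField (i : Fin 3) (_ : Pt) : Pt := (0, 0, Pi.single i 1)

def zhatField (φ : ℝ × (Fin 3 → ℝ) → ℝ) (i : Fin 3) (p : Pt) : Pt :=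
  p.1 • eField φ (0, Pi.single i 1) p + p.2.1 i • eField φ (1, 0) p
    + vzero p.2.2 • vField i p

section Representation

variable (φ : ℝ × (Fin 3 → ℝ) → ℝ) (g : Pt → ℝ) (p : Pt)

lemma Vop_eq_fderiv_vField (i : Fin 3) : Vop i g p = fderiv ℝ g p (vField i p) := rfl

lemma Wop_eq_fderiv : Wop g p = fderiv ℝ g p (0, 0, p.2.2) := by
  have h : ((0 : ℝ), (0 : Fin 3 → ℝ), p.2.2) = ∑ k, p.2.2 k • vField k p := by
    ext <;> simp [vField, Prod.fst_sum, Prod.snd_sum, Pi.single_apply]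
  simp [h, Wop, Vop_eq_fderiv_vField]

lemma eop_eq_fderiv_eField (d : ℝ × (Fin 3 → ℝ)) : eop φ d g p = fderiv ℝ g p (eField φ d p) := by
  have h : eField φ d p = (d.1, d.2, 0) + (-Dphi φ d (p.1, p.2.1)) • (0, 0, p.2.2) := by
    ext <;> simp [eField]
  rw [h, map_add, map_smul, ← Wop_eq_fderiv, eop, smul_eq_mul, neg_mul, sub_eq_add_neg]

lemma Zhat_eq_fderiv_zhatField (i : Fin 3) : Zhat φ i g p = fderiv ℝ g p (zhatField φ i p) := by
  simp [Zhat, zhatField, eop_eq_fderiv_eField, Vop_eq_fderiv_vField]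

end Representation

lemma fderiv_vzero_apply (v w : Fin 3 → ℝ) : fderiv ℝ vzero v w = (∑ k, v k * w k) / vzero v := by
  have hsq : HasFDerivAt (fun y : Fin 3 → ℝ => ∑ k, y k ^ 2)
      (∑ k, (2 * v k) • (proj k : (Fin 3 → ℝ) →L[ℝ] ℝ)) v :=
    HasFDerivAt.fun_sum fun k _ => by
      simpa using (hasFDerivAt_apply (𝕜 := ℝ) (F' := fun _ : Fin 3 => ℝ) k v).pow 2
  change fderiv ℝ (fun v : Fin 3 → ℝ => √(1 + ∑ k, v k ^ 2)) v w = _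
  rw [fderiv_sqrt (f := fun v : Fin 3 → ℝ => 1 + ∑ k, v k ^ 2) (by fun_prop) (by positivity)]
  simp only [fderiv_const_add, hsq.fderiv, Finset.sum_div, smul_apply, FunLike.coe_sum,
    Finset.sum_apply, FunLike.coe_smul, Pi.smul_apply, proj_apply, smul_eq_mul, Finset.mul_sum, vzero]
  exact Finset.sum_congr rfl fun k _ => by ring

lemma vzero_pos (v : Fin 3 → ℝ) : 0 < vzero v := Real.sqrt_pos.2 (by positivity)

lemma vzero_mul_self (v : Fin 3 → ℝ) : vzero v * vzero v = 1 + ∑ k, v k ^ 2 :=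
  Real.mul_self_sqrt (by positivity)

lemma differentiable_vzero : Differentiable ℝ vzero := fun v =>
  ((by fun_prop : Differentiable ℝ fun v : Fin 3 → ℝ => 1 + ∑ k, v k ^ 2) v).sqrt (by positivity)

section GeneralizedTranslationFields

variable {φ : ℝ × (Fin 3 → ℝ) → ℝ}

lemma differentiable_Dphi (hφ : ContDiff ℝ 2 φ) (d : ℝ × (Fin 3 → ℝ)) :
    Differentiable ℝ (Dphi φ d) :=
  ((hφ.fderiv_right (m := 1) le_rfl).clm_apply contDiff_const).differentiable one_ne_zero

lemma fderiv_Dphi_apply_comm (hφ : ContDiff ℝ 2 φ) (q c d : ℝ × (Fin 3 → ℝ)) :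
    fderiv ℝ (Dphi φ d) q c = fderiv ℝ (Dphi φ c) q d := by
  have h := (hφ.fderiv_right (m := 1) le_rfl).differentiable one_ne_zero q
  change fderiv ℝ (fun q => fderiv ℝ φ q d) q c = fderiv ℝ (fun q => fderiv ℝ φ q c) q d
  rw [fderiv_clm_apply h (differentiableAt_const d), fderiv_clm_apply h (differentiableAt_const c)]
  simpa using hφ.contDiffAt.isSymmSndFDerivAt (by simp) c d

lemma hasFDerivAt_Dphi_spacetime (hφ : ContDiff ℝ 2 φ) (d : ℝ × (Fin 3 → ℝ)) (p : Pt) :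
    HasFDerivAt (fun q : Pt => Dphi φ d (q.1, q.2.1))
      (fderiv ℝ (Dphi φ d) (p.1, p.2.1) ∘L ((fst ℝ ℝ _).prod (fst ℝ _ _ ∘L snd ℝ ℝ _))) p :=
  (differentiable_Dphi hφ d _).hasFDerivAt.comp p
    (hasFDerivAt_fst.prodMk (hasFDerivAt_fst.comp p hasFDerivAt_snd))

lemma fderiv_eField_apply (hφ : ContDiff ℝ 2 φ) (d : ℝ × (Fin 3 → ℝ)) (p w : Pt) :
    fderiv ℝ (eField φ d) p w =
      (0, 0, -fderiv ℝ (Dphi φ d) (p.1, p.2.1) (w.1, w.2.1) • p.2.2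
        - Dphi φ d (p.1, p.2.1) • w.2.2) := by
  have h : HasFDerivAt (eField φ d) _ p :=
    (hasFDerivAt_const d.1 p).prodMk <| (hasFDerivAt_const d.2 p).prodMk <|
      (hasFDerivAt_Dphi_spacetime hφ d p).neg.smul (hasFDerivAt_snd.comp p hasFDerivAt_snd)
  rw [h.fderiv]
  ext <;> simp
  ring

lemma differentiable_eField (hφ : ContDiff ℝ 2 φ) (d : ℝ × (Fin 3 → ℝ)) :
    Differentiable ℝ (eField φ d) := by
  have := differentiable_Dphi hφ d
  unfold eField
  fun_prop

lemma lieBracket_eField_eField (hφ : ContDiff ℝ 2 φ) (c d : ℝ × (Fin 3 → ℝ)) (p : Pt) :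
    lieBracket ℝ (eField φ c) (eField φ d) p = 0 := by
  simp only [lieBracket, fderiv_eField_apply hφ, eField, Prod.mk.eta]
  rw [fderiv_Dphi_apply_comm hφ _ c d]
  ext <;> simp
  ring

lemma differentiable_vField (i : Fin 3) : Differentiable ℝ (vField i) := differentiable_const _

lemma fderiv_vField (i : Fin 3) (p : Pt) : fderiv ℝ (vField i) p = 0 :=
  fderiv_const_apply _

lemma lieBracket_vField_eField (hφ : ContDiff ℝ 2 φ) (i : Fin 3) (d : ℝ × (Fin 3 → ℝ))
    (p : Pt) : lieBracket ℝ (vField i) (eField φ d) p = -Dphi φ d (p.1, p.2.1) • vField i p := by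
  simp only [lieBracket, fderiv_eField_apply hφ, fderiv_vField]
  ext <;> simp [vField, Prod.mk_zero_zero]

lemma differentiable_zhatField (hφ : ContDiff ℝ 2 φ) (i : Fin 3) :
    Differentiable ℝ (zhatField φ i) := by
  have := differentiable_eField hφ
  have := differentiable_vzero
  have := differentiable_vField i
  unfold zhatField
  fun_prop

lemma fderiv_time_apply (p w : Pt) : fderiv ℝ (fun q : Pt => q.1) p w = w.1 := by
  simp [fderiv_fst]

lemma fderiv_space_apply (i : Fin 3) (p w : Pt) :
    fderiv ℝ (fun q : Pt => q.2.1 i) p w = w.2.1 i := by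
  change fderiv ℝ (proj i ∘L fst ℝ _ _ ∘L snd ℝ ℝ ((Fin 3 → ℝ) × (Fin 3 → ℝ))) p w = _
  rw [ContinuousLinearMap.fderiv]
  rfl

lemma fderiv_vzero_comp_apply (p w : Pt) :
    fderiv ℝ (fun q : Pt => vzero q.2.2) p w = (∑ k, p.2.2 k * w.2.2 k) / vzero p.2.2 := by
  have h : HasFDerivAt (fun q : Pt => vzero q.2.2) _ p :=
    (differentiable_vzero _).hasFDerivAt.comp p (hasFDerivAt_snd.comp p hasFDerivAt_snd)
  rw [h.fderiv]
  exact fderiv_vzero_apply _ _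

lemma lieBracket_zhatField_eField (hφ : ContDiff ℝ 2 φ) (i : Fin 3) (d : ℝ × (Fin 3 → ℝ))
    (p : Pt) :
    lieBracket ℝ (zhatField φ i) (eField φ d) p =
      -d.1 • eField φ (0, Pi.single i 1) p - d.2 i • eField φ (1, 0) p
        - (Dphi φ d (p.1, p.2.1) / vzero p.2.2) • vField i p := by
  have hX := differentiable_eField hφ
  have hv := differentiable_vzero
  have hV := differentiable_vField i
  have hZ : zhatField φ i = (fun p => p.1 • eField φ (0, Pi.single i 1) p)
      + (fun p => p.2.1 i • eField φ (1, 0) p) + fun p => vzero p.2.2 • vField i p := rfl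
  rw [hZ, lieBracket_add_left (by fun_prop) (by fun_prop),
    lieBracket_add_left (by fun_prop) (by fun_prop), lieBracket_smul_left (by fun_prop) (hX _ _),
    lieBracket_smul_left (by fun_prop) (hX _ _), lieBracket_smul_left (by fun_prop) (hV _),
    lieBracket_eField_eField hφ, lieBracket_eField_eField hφ, lieBracket_vField_eField hφ,
    fderiv_time_apply, fderiv_space_apply, fderiv_vzero_comp_apply]
  set ψ := Dphi φ d (p.1, p.2.1)
  have hsum : ∑ k, p.2.2 k * (eField φ d p).2.2 k = -ψ * ∑ k, p.2.2 k ^ 2 := by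
    simp only [eField, Finset.mul_sum, Pi.smul_apply, smul_eq_mul]
    exact Finset.sum_congr rfl fun k _ => by ring
  have hcoef : -((∑ k, p.2.2 k * (eField φ d p).2.2 k) / vzero p.2.2) + vzero p.2.2 * -ψ
      = -(ψ / vzero p.2.2) := by
    have h0 := (vzero_pos p.2.2).ne'
    rw [hsum]
    field_simp
    linear_combination -ψ * vzero_mul_self p.2.2
  rw [smul_zero, smul_zero, add_zero, add_zero, smul_smul, ← add_smul, hcoef]
  simp only [eField]
  module

theorem Zhat_eop_sub_eop_Zhat {f : Pt → ℝ} (hφ : ContDiff ℝ 2 φ) (hf : ContDiff ℝ 2 f)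
    (i : Fin 3) (d : ℝ × (Fin 3 → ℝ)) (p : Pt) :
    Zhat φ i (eop φ d f) p - eop φ d (Zhat φ i f) p
      = -d.1 * eop φ (0, Pi.single i 1) f p - d.2 i * eop φ (1, 0) f p
        - (Dphi φ d (p.1, p.2.1) / vzero p.2.2) * Vop i f p := by
  have hX : eop φ d f = fun q => fderiv ℝ f q (eField φ d q) :=
    funext (eop_eq_fderiv_eField φ f · d)
  have hZ : Zhat φ i f = fun q => fderiv ℝ f q (zhatField φ i q) :=
    funext (Zhat_eq_fderiv_zhatField φ f · i)
  rw [Zhat_eq_fderiv_zhatField, eop_eq_fderiv_eField, hX, hZ,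
    ← fderiv_apply_lieBracket hf.contDiffAt (by simp) (differentiable_eField hφ d p)
      (differentiable_zhatField hφ i p),
    lieBracket_zhatField_eField hφ, eop_eq_fderiv_eField, eop_eq_fderiv_eField,
    Vop_eq_fderiv_vField]
  simp only [map_sub, map_smul, smul_eq_mul]

end GeneralizedTranslationFields

/-- Lemma 3.6, boost case: `[𝐙̂_i, 𝐞_j] f = −δ_{ij}·𝐞_0 f − (∂_{x^j}φ/v⁰)·∂_{vⁱ} f`
and `[𝐙̂_i, 𝐞_0] f = −𝐞_i f − (∂_t φ/v⁰)·∂_{vⁱ} f`. -/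
theorem commutator_Zhat_generalizedTranslation
    (φ : ℝ × (Fin 3 → ℝ) → ℝ) (hφ : ContDiff ℝ (⊤ : ℕ∞) φ)
    (f : Pt → ℝ) (hf : ContDiff ℝ (⊤ : ℕ∞) f) (i : Fin 3) (p : Pt) :
    (∀ j : Fin 3,
      Zhat φ i (eop φ ((0 : ℝ), Pi.single j 1) f) p
          - eop φ ((0 : ℝ), Pi.single j 1) (Zhat φ i f) p
        = -(if i = j then (1 : ℝ) else 0) * eop φ ((1 : ℝ), (0 : Fin 3 → ℝ)) f p
          - (Dphi φ ((0 : ℝ), Pi.single j 1) (p.1, p.2.1) / vzero p.2.2) * Vop i f p) ∧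
    (Zhat φ i (eop φ ((1 : ℝ), (0 : Fin 3 → ℝ)) f) p
        - eop φ ((1 : ℝ), (0 : Fin 3 → ℝ)) (Zhat φ i f) p
      = -eop φ ((0 : ℝ), Pi.single i 1) f p
        - (Dphi φ ((1 : ℝ), (0 : Fin 3 → ℝ)) (p.1, p.2.1) / vzero p.2.2) * Vop i f p) := by
  have h2 : (2 : WithTop ℕ∞) ≤ ((⊤ : ℕ∞) : WithTop ℕ∞) := WithTop.coe_le_coe.2 le_top
  refine ⟨fun j => ?_, ?_⟩
  · rw [Zhat_eop_sub_eop_Zhat (hφ.of_le h2) (hf.of_le h2)]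
    simp [Pi.single_apply]
  · rw [Zhat_eop_sub_eop_Zhat (hφ.of_le h2) (hf.of_le h2)]
    simp
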